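/- arXiv:2306.03474 — 2 statements merged into one kernel-verified Lean document; each statement's English description precedes it below -/
import Mathlib

section
/- Let γ ≥ 1 be an integer and let G be a graph with girth at least 6γ. If P and Q are paths of length γ in G whose edge sets share at least one edge, then E(P) ∩ E(Q) is the edge set of a path that occurs as a (consecutive) subpath of both P and Q. -/
/-!
If `p` and `q` are paths and `G` has no cycle of length at most `p.length + q.length`, then `p`
and `q` interact as in a forest: two subpaths with a common start that share another vertex must
take the same first step, since otherwise their initial segments up to that vertex would be distinct
paths with the same ends, which close a short cycle. Orient a common edge `cd` the same way in
`p` and `q` and extend it maximally in both directions inside both paths; this gives `r`. The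
remaining pieces of `p` and `q` share no edge: pieces on the same side of `cd` by maximality,
pieces on opposite sides because a shared edge would force the path `d c ⋯` (back along `p`)
and the rest of `q` after `d` to leave `d` the same way, yet `c` is not on the latter.
With `γ ≥ 1`, girth `6γ` exceeds `2γ`.
-/

open SimpleGraph

namespace SimpleGraph.Walk

variable {V : Type*} {G : SimpleGraph V} {n : ℕ}

theorem append_toWalk_append {u v c d : V} (h : G.Adj c d) (p : G.Walk u c) (q : G.Walk d v) :
    (p.append h.toWalk).append q = p.append (cons h q) := by
  simp [Adj.toWalk, ← append_assoc]

theorem IsSubwalk.reverse {a b u v : V} {r : G.Walk a b} {p : G.Walk u v} (h : r.IsSubwalk p) :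
    r.reverse.IsSubwalk p.reverse := by
  obtain ⟨ru, rv, rfl⟩ := h
  exact ⟨rv.reverse, ru.reverse, by simp [reverse_append, append_assoc]⟩

theorem IsPath.eq_of_length_add_le (hgirth : (n : ℕ∞) < G.egirth) {u v : V}
    {p q : G.Walk u v} (hp : p.IsPath) (hq : q.IsPath) (hlen : p.length + q.length ≤ n) :
    p = q := by
  by_contra hne
  obtain ⟨_, _, _, c, hc, hcl⟩ := hp.exists_isCycle_length_le_add_of_ne hq hne
  have : G.egirth ≤ n := (egirth_le_length hc).trans (by exact_mod_cast hcl.trans hlen)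
  exact this.not_gt hgirth

theorem IsPath.snd_eq_of_mem_support (hgirth : (n : ℕ∞) < G.egirth) {c a b g : V}
    {s : G.Walk c a} {t : G.Walk c b} (hs : s.IsPath) (ht : t.IsPath)
    (hlen : s.length + t.length ≤ n) (hgs : g ∈ s.support) (hgt : g ∈ t.support) (hgc : g ≠ c) :
    s.snd = t.snd := by
  classical
  have htake : s.takeUntil g hgs = t.takeUntil g hgt :=
    (hs.takeUntil hgs).eq_of_length_add_le hgirth (ht.takeUntil hgt) <| by
      have := s.length_takeUntil_le_length hgs
      have := t.length_takeUntil_le_length hgt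
      omega
  rw [← snd_takeUntil hgc s hgs, htake, snd_takeUntil hgc]

theorem IsPath.snd_eq_of_mem_edges (hgirth : (n : ℕ∞) < G.egirth) {c a b : V}
    {s : G.Walk c a} {t : G.Walk c b} (hs : s.IsPath) (ht : t.IsPath)
    (hlen : s.length + t.length ≤ n) {f : Sym2 V} (hfs : f ∈ s.edges) (hft : f ∈ t.edges) :
    s.snd = t.snd := by
  induction f using Sym2.ind with | h x y => ?_
  have hxy : x ≠ y := (s.adj_of_mem_edges hfs).ne
  by_cases hxc : x = c
  · subst hxc
    exact hs.snd_eq_of_mem_support hgirth ht hlen (s.snd_mem_support_of_mem_edges hfs)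
      (t.snd_mem_support_of_mem_edges hft) hxy.symm
  · exact hs.snd_eq_of_mem_support hgirth ht hlen (s.fst_mem_support_of_mem_edges hfs)
      (t.fst_mem_support_of_mem_edges hft) hxc

theorem IsPath.exists_common_prefix (hgirth : (n : ℕ∞) < G.egirth) {c a : V}
    {s : G.Walk c a} (hs : s.IsPath) {b : V} {t : G.Walk c b} (ht : t.IsPath)
    (hlen : s.length + t.length ≤ n) :
    ∃ (m : V) (w : G.Walk c m) (s' : G.Walk m a) (t' : G.Walk m b),
      s = w.append s' ∧ t = w.append t' ∧ s'.edges.Disjoint t'.edges := by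
  induction s generalizing b with
  | nil => exact ⟨_, .nil, .nil, t, rfl, rfl, by simp⟩
  | @cons _ c₁ _ ha s ih =>
    cases t with
    | nil => exact ⟨_, .nil, cons ha s, .nil, rfl, rfl, by simp⟩
    | @cons _ c₂ _ hb t =>
      by_cases hc : c₁ = c₂
      · subst hc
        obtain ⟨m, w, s', t', rfl, rfl, hdisj⟩ :=
          ih hs.of_cons ht.of_cons (by simp only [length_cons] at hlen; omega)
        exact ⟨m, cons ha w, s', t', rfl, rfl, hdisj⟩
      · refine ⟨_, .nil, cons ha s, cons hb t, rfl, rfl, fun f hfs hft => hc ?_⟩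
        simpa using hs.snd_eq_of_mem_edges hgirth ht hlen hfs hft

theorem IsPath.disjoint_edges_of_append_cons (hgirth : (n : ℕ∞) < G.egirth) {u v x y c d : V}
    {h : G.Adj c d} {pA : G.Walk u c} {pB : G.Walk d v} {qA : G.Walk x c} {qB : G.Walk d y}
    (hp : (pA.append (cons h pB)).IsPath) (hq : (qA.append (cons h qB)).IsPath)
    (hlen : (pA.append (cons h pB)).length + (qA.append (cons h qB)).length ≤ n) :
    pA.edges.Disjoint qB.edges := by
  intro f hfp hfq
  have hdp : d ∉ pA.support := fun hd =>
    hp.ne_of_mem_support_of_append h.ne.symm hd (by simp) rfl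
  have hcq : c ∉ qB.support := ((cons_isPath_iff h qB).mp hq.of_append_right).2
  have hs : (cons h.symm pA.reverse).IsPath :=
    (cons_isPath_iff _ _).mpr ⟨hp.of_append_left.reverse, by simpa using hdp⟩
  have hsnd := hs.snd_eq_of_mem_edges hgirth hq.of_append_right.of_cons
    (by simp only [length_append, length_cons, length_reverse] at hlen ⊢; omega)
    (by simpa using Or.inr hfp) hfq
  rw [snd_cons] at hsnd
  exact hcq (hsnd ▸ qB.getVert_mem_support 1)

theorem IsPath.exists_common_subwalk_of_isSubwalk_toWalk (hgirth : (n : ℕ∞) < G.egirth)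
    {u v x y c d : V} {p : G.Walk u v} {q : G.Walk x y} (hp : p.IsPath) (hq : q.IsPath)
    (hlen : p.length + q.length ≤ n) {h : G.Adj c d} (hhp : h.toWalk.IsSubwalk p)
    (hhq : h.toWalk.IsSubwalk q) :
    ∃ (a b : V) (r : G.Walk a b),
      (∀ e, e ∈ r.edges ↔ e ∈ p.edges ∧ e ∈ q.edges) ∧ r.IsSubwalk p ∧ r.IsSubwalk q := by
  obtain ⟨pA, pB, rfl⟩ := hhp
  obtain ⟨qA, qB, rfl⟩ := hhq
  simp only [append_toWalk_append] at hp hq hlen ⊢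
  have hpq := hp.disjoint_edges_of_append_cons hgirth hq hlen
  have hqp := hq.disjoint_edges_of_append_cons hgirth hp (by omega)
  obtain ⟨m₁, w₁, s₁, t₁, hs₁, ht₁, hd₁⟩ := hp.of_append_left.reverse.exists_common_prefix hgirth
    hq.of_append_left.reverse
    (by simp only [length_append, length_cons, length_reverse] at hlen ⊢; omega)
  obtain ⟨m₂, w₂, s₂, t₂, rfl, rfl, hd₂⟩ := hp.of_append_right.of_cons.exists_common_prefix hgirth
    hq.of_append_right.of_cons (by simp only [length_append, length_cons] at hlen; omega)
  obtain rfl : pA = s₁.reverse.append w₁.reverse := by rw [← reverse_append, ← hs₁, reverse_reverse]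
  obtain rfl : qA = t₁.reverse.append w₁.reverse := by rw [← reverse_append, ← ht₁, reverse_reverse]
  set r := w₁.reverse.append (cons h w₂)
  have hpr : (s₁.reverse.append w₁.reverse).append (cons h (w₂.append s₂)) =
       (s₁.reverse.append r).append s₂ := by
    simp only [r, ← append_assoc, cons_append]
  have hqr : (t₁.reverse.append w₁.reverse).append (cons h (w₂.append t₂)) =
       (t₁.reverse.append r).append t₂ := by
    simp only [r, ← append_assoc, cons_append]
  refine ⟨m₁, m₂, r, fun e => ?_, ⟨_, _, hpr⟩, ⟨_, _, hqr⟩⟩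
  simp only [hpr, hqr, edges_append, edges_reverse, List.mem_append, List.mem_reverse]
  refine ⟨fun he => ⟨.inl (.inr he), .inl (.inr he)⟩, ?_⟩
  have hd₁₂ : s₁.edges.Disjoint t₂.edges := fun e hs ht => @hpq e (by simp [hs]) (by simp [ht])
  have hd₂₁ : s₂.edges.Disjoint t₁.edges := fun e hs ht => @hqp e (by simp [ht]) (by simp [hs])
  rintro ⟨(hs | hr) | hs, (ht | hr) | ht⟩ <;> first
    | assumption
    | exact (hd₁ hs ht).elim
    | exact (hd₂ hs ht).elim
    | exact (hd₁₂ hs ht).elim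
    | exact (hd₂₁ hs ht).elim

theorem IsPath.exists_common_subwalk (hgirth : (n : ℕ∞) < G.egirth) {u v x y : V}
    {p : G.Walk u v} {q : G.Walk x y} (hp : p.IsPath) (hq : q.IsPath)
    (hlen : p.length + q.length ≤ n) {f : Sym2 V} (hfp : f ∈ p.edges) (hfq : f ∈ q.edges) :
    ∃ (a b : V) (r : G.Walk a b), (∀ e, e ∈ r.edges ↔ e ∈ p.edges ∧ e ∈ q.edges) ∧
      r.IsSubwalk p ∧ (r.IsSubwalk q ∨ r.reverse.IsSubwalk q) := by
  obtain ⟨⟨⟨c, d⟩, h⟩, hd, rfl⟩ := List.mem_map.mp hfp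
  have hhp := (isSubwalk_toWalk_iff_mem_darts p h).mpr hd
  rcases (isSubwalk_toWalk_iff_mem_edges h).mpr hfq with hhq | hhq
  · obtain ⟨a, b, r, hr, hrp, hrq⟩ :=
      hp.exists_common_subwalk_of_isSubwalk_toWalk hgirth hq hlen hhp hhq
    exact ⟨a, b, r, hr, hrp, .inl hrq⟩
  · have hhq' : h.toWalk.IsSubwalk q.reverse := by simpa [Adj.toWalk] using hhq.reverse
    obtain ⟨a, b, r, hr, hrp, hrq⟩ := hp.exists_common_subwalk_of_isSubwalk_toWalk hgirth
      hq.reverse (by simpa using hlen) hhp hhq'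
    exact ⟨a, b, r, by simpa using hr, hrp, .inr (by simpa using hrq.reverse)⟩

end SimpleGraph.Walk

theorem statement8 (γ : ℕ) (hγ : 1 ≤ γ) (V : Type) (G : SimpleGraph V)
    (hgirth : ((6 * γ : ℕ) : ℕ∞) ≤ G.egirth)
    (u v x y : V) (p : G.Walk u v) (q : G.Walk x y)
    (hp : p.IsPath) (hq : q.IsPath) (hpl : p.length = γ) (hql : q.length = γ)
    (hshare : ∃ e, e ∈ p.edges ∧ e ∈ q.edges) :
    ∃ (a b : V) (r : G.Walk a b), r.IsPath ∧
      (∀ e, e ∈ r.edges ↔ e ∈ p.edges ∧ e ∈ q.edges) ∧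
      r.support <:+: p.support ∧
      (r.support <:+: q.support ∨ r.support.reverse <:+: q.support) := by
  obtain ⟨f, hfp, hfq⟩ := hshare
  have hgirth' : ((p.length + q.length : ℕ) : ℕ∞) < G.egirth :=
    lt_of_lt_of_le (by norm_cast; omega) hgirth
  obtain ⟨a, b, r, hr, hrp, hrq⟩ := hp.exists_common_subwalk hgirth' hq le_rfl hfp hfq
  refine ⟨a, b, r, Walk.isPath_of_isSubwalk hrp hp, hr,
    Walk.isSubwalk_iff_support_isInfix.mp hrp, ?_⟩
  simpa [Walk.isSubwalk_iff_support_isInfix] using hrq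
end

section
/- Let γ ≥ 1, let S be a finite set equipped with a fixed-point-free involution, and let G be a graph with girth at least 6γ. Let P be a path of length γ in G, and let ℓ and ℓ' be two reduced S-labellings of G that assign the same label to every edge of G not belonging to E(P). Suppose there exists a path Q of length γ in G with Q ≠ P such that ℓ(P) = ℓ(Q) and ℓ'(P) = ℓ'(Q). Then ℓ = ℓ' (in particular ℓ and ℓ' agree on every edge of P). -/
open SimpleGraph

/-- An `S`-labelling of `G` (with `inv` the formal-inverse involution on `S`). -/
def IsGoodLabelling {V S : Type*} (G : SimpleGraph V) (inv : S → S) (ℓ : V → V → S) : Prop :=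
  ∀ x y, G.Adj x y → ℓ y x = inv (ℓ x y)

/-- The labelling `ℓ` is reduced: distinct neighbours of a vertex get distinct labels. -/
def ReducedLabelling {V S : Type*} (G : SimpleGraph V) (ℓ : V → V → S) : Prop :=
  ∀ v u w, G.Adj v u → G.Adj v w → u ≠ w → ℓ v u ≠ ℓ v w

/-- The word read along a walk. -/
def walkWord {V S : Type*} {G : SimpleGraph V} (ℓ : V → V → S) {u v : V} (p : G.Walk u v) :
    List S := p.darts.map (fun d => ℓ d.toProd.1 d.toProd.2)

/-!
Write `D` for the set of positions `i` at which `ℓ` and `ℓ'` disagree on the `i`-th edge of `P`,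
and suppose it is nonempty, with least element `t₀` and greatest element `t₁`. Since the words agree,
`ℓ` and `ℓ'` also disagree on the `t₀`-th and `t₁`-th edges of `Q`, so these lie on `P`, at
positions that again belong to `D`. Both the segment of `Q` from its `t₀`-th to its `(t₁+1)`-st
vertex and the segment of `P` between the same two vertices have length at most `γ`; as the girth
exceeds `2γ`, they coincide. By extremality of `t₀` and `t₁`, the segment of `Q` then runs either
along positions `t₀, …, t₁ + 1` of `P`, or along them backwards. In the first case `Q` and `P` share
their `t₀`-th vertex; in the second, the middle of the segment is either a shared vertex in the same
position or an edge traversed by `Q` against `P`. A shared vertex in the same position forces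
`Q = P`, because a reduced labelling determines a path from one vertex and its word, and an edge
traversed in both directions would carry a label equal to its own inverse.
-/

namespace SimpleGraph

variable {V S : Type*} {G : SimpleGraph V}

theorem ReducedLabelling.eq_of_label_eq {ℓ : V → V → S} (hr : ReducedLabelling G ℓ)
    {v u w : V} (hu : G.Adj v u) (hw : G.Adj v w) (h : ℓ v u = ℓ v w) : u = w :=
  not_not.mp fun hne ↦ hr v u w hu hw hne h

theorem IsGoodLabelling.eq_swap_iff {inv : S → S} (hinv : Function.Involutive inv)
    {ℓ ℓ' : V → V → S} (hl : IsGoodLabelling G inv ℓ) (hl' : IsGoodLabelling G inv ℓ')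
    {x y : V} (h : G.Adj x y) : ℓ y x = ℓ' y x ↔ ℓ x y = ℓ' x y := by
  rw [hl x y h, hl' x y h, hinv.injective.eq_iff]

namespace Walk

variable {u v x y : V}

theorem length_walkWord (ℓ : V → V → S) (p : G.Walk u v) :
    (walkWord ℓ p).length = p.length := by
  simp [walkWord]

theorem getElem_walkWord (ℓ : V → V → S) (p : G.Walk u v) {i : ℕ}
    (hi : i < (walkWord ℓ p).length) :
    (walkWord ℓ p)[i] = ℓ (p.getVert i) (p.getVert (i + 1)) := by
  simp [walkWord, darts_getElem_eq_getVert]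

theorem label_getVert_eq_of_walkWord_eq {ℓ : V → V → S} {p : G.Walk u v}
    {q : G.Walk x y} (h : walkWord ℓ p = walkWord ℓ q) {i : ℕ} (hi : i < p.length) :
    ℓ (q.getVert i) (q.getVert (i + 1)) = ℓ (p.getVert i) (p.getVert (i + 1)) := by
  have hi' : i < (walkWord ℓ p).length := by rwa [length_walkWord]
  rw [← getElem_walkWord ℓ p hi', List.getElem_of_eq h hi', getElem_walkWord]

theorem getVert_eq_of_walkWord_eq {inv : S → S} {ℓ : V → V → S} (hl : IsGoodLabelling G inv ℓ)
    (hr : ReducedLabelling G ℓ) {p : G.Walk u v} {q : G.Walk x y}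
    (hlen : q.length = p.length) (hw : walkWord ℓ p = walkWord ℓ q) {j : ℕ}
    (hj : j ≤ p.length) (hpq : q.getVert j = p.getVert j) :
    ∀ k ≤ p.length, q.getVert k = p.getVert k := by
  intro k hk
  have hadj {i : ℕ} (hi : i < p.length) : G.Adj (q.getVert i) (q.getVert (i + 1)) :=
    q.adj_getVert_succ (hlen ▸ hi)
  rcases le_total j k with hjk | hkj
  · induction k, hjk using Nat.le_induction with
    | base => exact hpq
    | succ k _ ih =>
      have hk' : k < p.length := by omega
      have e := ih hk'.le
      refine hr.eq_of_label_eq (e ▸ hadj hk') (p.adj_getVert_succ hk') ?_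
      rw [← label_getVert_eq_of_walkWord_eq hw hk', e]
  · induction hkj using Nat.decreasingInduction with
    | self => exact hpq
    | of_succ k hkj ih =>
      have hk' : k < p.length := by omega
      have e := ih (by omega)
      refine hr.eq_of_label_eq (e ▸ (hadj hk').symm) (p.adj_getVert_succ hk').symm ?_
      rw [hl _ _ (p.adj_getVert_succ hk'), ← label_getVert_eq_of_walkWord_eq hw hk', ← e,
        hl _ _ (hadj hk')]

theorem getVert_take_drop (p : G.Walk u v) (a : ℕ) {n k : ℕ} (hk : k ≤ n) :
    ((p.drop a).take n).getVert k = p.getVert (a + k) := by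
  rw [take_getVert, drop_getVert, min_eq_right hk]

theorem length_take_drop (p : G.Walk u v) {a n : ℕ} (h : a + n ≤ p.length) :
    ((p.drop a).take n).length = n := by
  rw [take_length, drop_length]; omega

theorem IsPath.eq_of_length_add_length_lt_egirth {p q : G.Walk u v}
    (hp : p.IsPath) (hq : q.IsPath) (h : ((p.length + q.length : ℕ) : ℕ∞) < G.egirth) :
    p = q := by
  by_contra hne
  obtain ⟨_, _, p', q', hp', hq', hc⟩ := hp.exists_isCycle_of_ne hq hne
  have hle : (p'.append q'.reverse).length ≤ p.length + q.length := by
    rw [length_append, length_reverse]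
    exact add_le_add (length_le_of_isSubwalk hp') (length_le_of_isSubwalk hq')
  exact (egirth_le_length hc).not_gt (lt_of_le_of_lt (by exact_mod_cast hle) h)

theorem IsPath.getVert_add_eq_or_getVert_sub_eq {p : G.Walk u v}
    {q : G.Walk x y} (hp : p.IsPath) (hq : q.IsPath)
    (hgirth : ((q.length + p.length : ℕ) : ℕ∞) < G.egirth) {s e a b : ℕ} (hse : s ≤ e)
    (he : e ≤ q.length) (ha : a ≤ p.length) (hb : b ≤ p.length)
    (hsa : q.getVert s = p.getVert a) (heb : q.getVert e = p.getVert b) :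
    (e - s = b - a ∧ ∀ k ≤ e - s, q.getVert (s + k) = p.getVert (a + k)) ∨
      (e - s = a - b ∧ ∀ k ≤ e - s, q.getVert (s + k) = p.getVert (a - k)) := by
  set Q := (q.drop s).take (e - s)
  have hQ : Q.IsPath := (hq.drop s).take _
  have hQl : Q.length = e - s := q.length_take_drop (by omega)
  have hQv {k : ℕ} (hk : k ≤ e - s) : Q.getVert k = q.getVert (s + k) :=
    q.getVert_take_drop s hk
  have hQe : (q.drop s).getVert (e - s) = q.getVert e := by
    rw [drop_getVert, Nat.add_sub_cancel' hse]
  rcases le_total a b with hab | hba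
  · set P := (p.drop a).take (b - a)
    have hPv {k : ℕ} (hk : k ≤ b - a) : P.getVert k = p.getVert (a + k) :=
      p.getVert_take_drop a hk
    have hPe : (p.drop a).getVert (b - a) = p.getVert b := by
      rw [drop_getVert, Nat.add_sub_cancel' hab]
    have hPl : P.length = b - a := p.length_take_drop (by omega)
    have hQP : Q.copy hsa (by rw [hQe, heb, hPe]) = P := by
      refine ((isPath_copy _ _ _).mpr hQ).eq_of_length_add_length_lt_egirth
        ((hp.drop a).take _) (lt_of_le_of_lt ?_ hgirth)
      rw [length_copy, hQl, hPl]
      exact_mod_cast (by omega)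
    have hlen : e - s = b - a := by rw [← hQl, ← hPl, ← hQP, length_copy]
    refine .inl ⟨hlen, fun k hk ↦ ?_⟩
    rw [← hQv hk, ← hPv (hlen ▸ hk), ← hQP, getVert_copy]
  · set P := ((p.drop b).take (a - b)).reverse
    have hPv {k : ℕ} (hk : k ≤ a - b) : P.getVert k = p.getVert (a - k) := by
      rw [getVert_reverse, p.length_take_drop (by omega), p.getVert_take_drop b (by omega)]
      congr 1; omega
    have hPs : (p.drop b).getVert (a - b) = p.getVert a := by
      rw [drop_getVert, Nat.add_sub_cancel' hba]
    have hPl : P.length = a - b := by rw [length_reverse, p.length_take_drop (by omega)]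
    have hQP : Q.copy (hsa.trans hPs.symm) (by rw [hQe, heb]) = P := by
      refine ((isPath_copy _ _ _).mpr hQ).eq_of_length_add_length_lt_egirth
        ((hp.drop b).take _).reverse (lt_of_le_of_lt ?_ hgirth)
      rw [length_copy, hQl, hPl]
      exact_mod_cast (by omega)
    have hlen : e - s = a - b := by rw [← hQl, ← hPl, ← hQP, length_copy]
    refine .inr ⟨hlen, fun k hk ↦ ?_⟩
    rw [← hQv hk, ← hPv (hlen ▸ hk), ← hQP, getVert_copy]

theorem sigma_eq_of_getVert_eq {p : G.Walk u v} {q : G.Walk x y} (hlen : q.length = p.length)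
    (h : ∀ k ≤ p.length, q.getVert k = p.getVert k) :
    (⟨x, y, q⟩ : Σ a : V, Σ b : V, G.Walk a b) = ⟨u, v, p⟩ := by
  obtain rfl : x = u := by simpa using h 0 (Nat.zero_le _)
  obtain rfl : y = v := by rw [← q.getVert_length, hlen, h _ le_rfl, getVert_length]
  rw [ext_getVert_le_length hlen fun k hk ↦ h k (hlen ▸ hk)]

section
variable {inv : S → S} {ℓ ℓ' : V → V → S} {p : G.Walk u v} {q : G.Walk x y}

theorem getVert_eq_of_walkWord_eq_of_reverse_segment (hfpf : ∀ a, inv a ≠ a)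
    (hl : IsGoodLabelling G inv ℓ) (hr : ReducedLabelling G ℓ) (hlen : q.length = p.length)
    (hw : walkWord ℓ p = walkWord ℓ q) {c d : ℕ} (hcd : c < d) (hd : d ≤ p.length)
    (hrev : ∀ m, c ≤ m → m ≤ d → q.getVert m = p.getVert (c + d - m)) :
    ∀ k ≤ p.length, q.getVert k = p.getVert k := by
  obtain ⟨m, hm | hm⟩ := Nat.even_or_odd' (c + d)
  · exact getVert_eq_of_walkWord_eq hl hr hlen hw (j := m) (by omega)
      (by rw [hrev m (by omega) (by omega)]; congr 1; omega)
  · intro k hk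
    have hm' : m < p.length := by omega
    have hfst : q.getVert m = p.getVert (m + 1) := by
      rw [hrev m (by omega) (by omega)]; congr 1; omega
    have hsnd : q.getVert (m + 1) = p.getVert m := by
      rw [hrev (m + 1) (by omega) (by omega)]; congr 1; omega
    refine (hfpf (ℓ (p.getVert m) (p.getVert (m + 1))) ?_).elim
    calc inv (ℓ (p.getVert m) (p.getVert (m + 1)))
        = ℓ (q.getVert m) (q.getVert (m + 1)) := by
          rw [hfst, hsnd, hl _ _ (p.adj_getVert_succ hm')]
      _ = ℓ (p.getVert m) (p.getVert (m + 1)) := label_getVert_eq_of_walkWord_eq hw hm'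

theorem getVert_eq_of_walkWord_eq_of_lt_egirth (hfpf : ∀ a, inv a ≠ a)
    (hl : IsGoodLabelling G inv ℓ) (hr : ReducedLabelling G ℓ) (hp : p.IsPath) (hq : q.IsPath)
    (hlen : q.length = p.length) (hgirth : ((2 * p.length : ℕ) : ℕ∞) < G.egirth)
    (hw : walkWord ℓ p = walkWord ℓ q) {t₀ t₁ : ℕ} (ht : t₀ ≤ t₁) (ht₁ : t₁ < p.length)
    (hon : ∀ j, j = t₀ ∨ j = t₁ → s(q.getVert j, q.getVert (j + 1)) ∈ p.edges)
    (hbound : ∀ j c, j = t₀ ∨ j = t₁ → c < p.length →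
      s(q.getVert j, q.getVert (j + 1)) = s(p.getVert c, p.getVert (c + 1)) → t₀ ≤ c ∧ c ≤ t₁) :
    ∀ k ≤ p.length, q.getVert k = p.getVert k := by
  obtain ⟨a, hqa, ha⟩ :=
    mem_support_iff_exists_getVert.1 (p.fst_mem_support_of_mem_edges (hon t₀ (.inl rfl)))
  obtain ⟨b, hqb, hb⟩ :=
    mem_support_iff_exists_getVert.1 (p.snd_mem_support_of_mem_edges (hon t₁ (.inr rfl)))
  rcases hp.getVert_add_eq_or_getVert_sub_eq hq (by rwa [hlen, ← two_mul])
    (s := t₀) (e := t₁ + 1) (by omega) (by omega) ha hb hqa.symm hqb.symm with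
    ⟨hab, hfw⟩ | ⟨hab, hbw⟩
  · have hedge (k : ℕ) (hk : k < t₁ + 1 - t₀) : s(q.getVert (t₀ + k), q.getVert (t₀ + k + 1)) =
        s(p.getVert (a + k), p.getVert (a + k + 1)) := by
      rw [add_assoc t₀, hfw k (by omega), hfw (k + 1) (by omega)]; rfl
    have hat₀ := hbound t₀ a (.inl rfl) (by omega) (by simpa using hedge 0 (by omega))
    have hat₁ := hbound t₁ (a + (t₁ - t₀)) (.inr rfl) (by omega)
      (by simpa [Nat.add_sub_cancel' ht] using hedge (t₁ - t₀) (by omega))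
    exact getVert_eq_of_walkWord_eq hl hr hlen hw (j := t₀) (by omega)
      (by rw [← add_zero t₀, hfw 0 (by omega)]; congr 1; omega)
  · have hedge (k : ℕ) (hk : k < t₁ + 1 - t₀) : s(q.getVert (t₀ + k), q.getVert (t₀ + k + 1)) =
        s(p.getVert (a - (k + 1)), p.getVert (a - (k + 1) + 1)) := by
      rw [add_assoc t₀, hbw k (by omega), hbw (k + 1) (by omega), Sym2.eq_swap]
      congr 2; omega
    have hat₀ := hbound t₀ (a - 1) (.inl rfl) (by omega) (by simpa using hedge 0 (by omega))
    have hat₁ := hbound t₁ (a - (t₁ - t₀ + 1)) (.inr rfl) (by omega)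
      (by simpa [Nat.add_sub_cancel' ht] using hedge (t₁ - t₀) (by omega))
    refine getVert_eq_of_walkWord_eq_of_reverse_segment hfpf hl hr hlen hw (c := t₀) (d := t₁ + 1)
      (by omega) (by omega) fun m hm hm' ↦ ?_
    rw [show m = t₀ + (m - t₀) by omega, hbw _ (by omega)]
    congr 1; omega

theorem label_getVert_eq_of_walkWord_eq_of_ne (hinv : Function.Involutive inv)
    (hfpf : ∀ a, inv a ≠ a) (hl : IsGoodLabelling G inv ℓ) (hl' : IsGoodLabelling G inv ℓ')
    (hr : ReducedLabelling G ℓ) (hp : p.IsPath) (hq : q.IsPath) (hlen : q.length = p.length)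
    (hgirth : ((2 * p.length : ℕ) : ℕ∞) < G.egirth)
    (hagree : ∀ a b, G.Adj a b → s(a, b) ∉ p.edges → ℓ a b = ℓ' a b)
    (hw : walkWord ℓ p = walkWord ℓ q) (hw' : walkWord ℓ' p = walkWord ℓ' q)
    (hne : ¬ ∀ k ≤ p.length, q.getVert k = p.getVert k) {i : ℕ} (hi : i < p.length) :
    ℓ (p.getVert i) (p.getVert (i + 1)) = ℓ' (p.getVert i) (p.getVert (i + 1)) := by
  classical
  by_contra hi'
  set D := (Finset.range p.length).filter
    fun j ↦ ℓ (p.getVert j) (p.getVert (j + 1)) ≠ ℓ' (p.getVert j) (p.getVert (j + 1))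
  have hmemD {j : ℕ} : j ∈ D ↔ j < p.length ∧
      ℓ (p.getVert j) (p.getVert (j + 1)) ≠ ℓ' (p.getVert j) (p.getVert (j + 1)) := by
    rw [Finset.mem_filter, Finset.mem_range]
  have hD : D.Nonempty := ⟨i, hmemD.2 ⟨hi, hi'⟩⟩
  have hqD {j : ℕ} (hj : j ∈ D) :
      ℓ (q.getVert j) (q.getVert (j + 1)) ≠ ℓ' (q.getVert j) (q.getVert (j + 1)) := by
    rw [label_getVert_eq_of_walkWord_eq hw (hmemD.1 hj).1,
      label_getVert_eq_of_walkWord_eq hw' (hmemD.1 hj).1]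
    exact (hmemD.1 hj).2
  have hon {j : ℕ} (hj : j ∈ D) : s(q.getVert j, q.getVert (j + 1)) ∈ p.edges := by
    by_contra h
    exact hqD hj (hagree _ _ (q.adj_getVert_succ (hlen ▸ (hmemD.1 hj).1)) h)
  have hmemD_of_edge {j c : ℕ} (hj : j ∈ D) (hc : c < p.length)
      (h : s(q.getVert j, q.getVert (j + 1)) = s(p.getVert c, p.getVert (c + 1))) : c ∈ D := by
    refine hmemD.2 ⟨hc, fun hc' ↦ hqD hj ?_⟩
    rcases Sym2.eq_iff.1 h with ⟨h1, h2⟩ | ⟨h1, h2⟩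
    · rwa [h1, h2]
    · rwa [h1, h2, IsGoodLabelling.eq_swap_iff hinv hl hl' (p.adj_getVert_succ hc)]
  have hext {j : ℕ} (hj : j = D.min' hD ∨ j = D.max' hD) : j ∈ D := by
    rcases hj with rfl | rfl
    exacts [D.min'_mem hD, D.max'_mem hD]
  refine hne (getVert_eq_of_walkWord_eq_of_lt_egirth hfpf hl hr hp hq hlen hgirth hw
    (D.min'_le_max' hD) (hmemD.1 (D.max'_mem hD)).1 (fun j hj ↦ hon (hext hj)) ?_)
  intro j c hj hc h
  have hc := hmemD_of_edge (hext hj) hc h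
  exact ⟨D.min'_le c hc, D.le_max' c hc⟩

end

theorem label_eq_of_label_getVert_eq {inv : S → S} (hinv : Function.Involutive inv)
    {ℓ ℓ' : V → V → S} (hl : IsGoodLabelling G inv ℓ) (hl' : IsGoodLabelling G inv ℓ')
    {p : G.Walk u v} (hagree : ∀ a b, G.Adj a b → s(a, b) ∉ p.edges → ℓ a b = ℓ' a b)
    (hpath : ∀ i < p.length,
      ℓ (p.getVert i) (p.getVert (i + 1)) = ℓ' (p.getVert i) (p.getVert (i + 1)))
    {a b : V} (hab : G.Adj a b) : ℓ a b = ℓ' a b := by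
  by_cases h : s(a, b) ∈ p.edges
  · obtain ⟨i, hi, he⟩ := List.getElem_of_mem h
    rw [getElem_edges] at he
    have hi' : i < p.length := by simpa using hi
    rcases Sym2.eq_iff.1 he with ⟨rfl, rfl⟩ | ⟨rfl, rfl⟩
    · exact hpath i hi'
    · exact (IsGoodLabelling.eq_swap_iff hinv hl hl' (p.adj_getVert_succ hi')).2 (hpath i hi')
  · exact hagree a b hab h

end Walk
end SimpleGraph

theorem statement12_general (γ : ℕ) (hγ : 1 ≤ γ) (V S : Type)
    (inv : S → S) (hinv : Function.Involutive inv) (hfpf : ∀ a, inv a ≠ a)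
    (G : SimpleGraph V) (hgirth : ((6 * γ : ℕ) : ℕ∞) ≤ G.egirth)
    (u v : V) (p : G.Walk u v) (hp : p.IsPath) (hpl : p.length = γ)
    (ℓ ℓ' : V → V → S)
    (hl : IsGoodLabelling G inv ℓ) (hl' : IsGoodLabelling G inv ℓ')
    (hr : ReducedLabelling G ℓ)
    (hagree : ∀ a b, G.Adj a b → s(a, b) ∉ p.edges → ℓ a b = ℓ' a b)
    (hQ : ∃ (x y : V) (q : G.Walk x y), q.IsPath ∧ q.length = γ ∧
      (⟨x, y, q⟩ : Σ a : V, Σ b : V, G.Walk a b) ≠ ⟨u, v, p⟩ ∧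
      walkWord ℓ p = walkWord ℓ q ∧ walkWord ℓ' p = walkWord ℓ' q) :
    ∀ a b, G.Adj a b → ℓ a b = ℓ' a b := by
  obtain ⟨x, y, q, hq, hql, hne, hw, hw'⟩ := hQ
  have hlen : q.length = p.length := hql.trans hpl.symm
  have hgirth' : ((2 * p.length : ℕ) : ℕ∞) < G.egirth :=
    lt_of_lt_of_le (by rw [hpl]; exact_mod_cast (by omega : 2 * γ < 6 * γ)) hgirth
  intro a b hab
  exact Walk.label_eq_of_label_getVert_eq hinv hl hl' hagree
    (fun i hi ↦ Walk.label_getVert_eq_of_walkWord_eq_of_ne hinv hfpf hl hl' hr hp hq hlen hgirth'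
      hagree hw hw' (fun h ↦ hne (Walk.sigma_eq_of_getVert_eq hlen h)) hi) hab

theorem statement12 (γ : ℕ) (hγ : 1 ≤ γ) (V S : Type) [Fintype S]
    (inv : S → S) (hinv : Function.Involutive inv) (hfpf : ∀ a, inv a ≠ a)
    (G : SimpleGraph V) (hgirth : ((6 * γ : ℕ) : ℕ∞) ≤ G.egirth)
    (u v : V) (p : G.Walk u v) (hp : p.IsPath) (hpl : p.length = γ)
    (ℓ ℓ' : V → V → S)
    (hl : IsGoodLabelling G inv ℓ) (hl' : IsGoodLabelling G inv ℓ')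
    (hr : ReducedLabelling G ℓ) (hr' : ReducedLabelling G ℓ')
    (hagree : ∀ a b, G.Adj a b → s(a, b) ∉ p.edges → ℓ a b = ℓ' a b)
    (hQ : ∃ (x y : V) (q : G.Walk x y), q.IsPath ∧ q.length = γ ∧
      (⟨x, y, q⟩ : Σ a : V, Σ b : V, G.Walk a b) ≠ ⟨u, v, p⟩ ∧
      walkWord ℓ p = walkWord ℓ q ∧ walkWord ℓ' p = walkWord ℓ' q) :
    ∀ a b, G.Adj a b → ℓ a b = ℓ' a b :=
  statement12_general γ hγ V S inv hinv hfpf G hgirth u v p hp hpl ℓ ℓ' hl hl' hr hagree hQ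
end
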